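/- Let G be a directed graph with maximum out-degree φ ≥ 1 and let there be k agents. For any valid configuration 𝒜 (an injective map from the agent set to vertices), the number of valid configurations 𝒜* with d(𝒜*,𝒜) = h (where the distance between configurations is the sum over agents p of d(𝒜*(p),𝒜(p))) is at most ((h+k-1)! / (h!·(k-1)!))·φ^h. -/

import Mathlib

/-!
Record, for a configuration `B`, the vector `p ↦ d(B p, A p)` of per-agent distances. These
vectors sum to `h`, so by stars and bars there are at most `C(h + k - 1, h)` of them; and the
configurations with a prescribed vector `δ` choose each `B p` independently on the sphere of
radius `δ p` around `A p`, so there are at most `∏ φ ^ δ p = φ ^ h` of them.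
-/

/-- `stepsTo E n v u` : there is a directed walk of length `n` from `v` to `u`. -/
def stepsTo {V : Type*} (E : V → V → Prop) : ℕ → V → V → Prop
  | 0 => fun v u => v = u
  | n + 1 => fun v u => ∃ w, E v w ∧ stepsTo E n w u

/-- `gdist E v u` : length of a shortest directed path from `v` to `u`. -/
noncomputable def gdist {V : Type*} (E : V → V → Prop) (v u : V) : ℕ :=
  sInf {n | stepsTo E n v u}

open Finset

theorem Finset.card_piAntidiag_univ_nat {ι : Type*} [Fintype ι] [DecidableEq ι] (n : ℕ) :
    #(piAntidiag (univ : Finset ι) n) = (Fintype.card ι + n - 1).choose n := by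
  rw [← map_sym_eq_piAntidiag, card_map, sym_univ, card_univ, Sym.card_sym_eq_choose]

theorem Fintype.card_piFinset_le_pow_sum {ι α : Type*} [Fintype ι] [DecidableEq ι]
    {s : ι → Finset α} {φ : ℕ} {d : ι → ℕ} (hs : ∀ i, #(s i) ≤ φ ^ d i) :
    #(Fintype.piFinset s) ≤ φ ^ ∑ i, d i := by
  rw [Fintype.card_piFinset, ← prod_pow_eq_pow_sum]
  exact prod_le_prod' fun i _ => hs i

theorem ncard_sum_dist_eq_le {V P : Type*} [Fintype V] [Fintype P]
    (dist : V → V → ℕ) {φ : ℕ}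
    (hsphere : ∀ w m, {u | dist w u = m}.ncard ≤ φ ^ m) (A : P → V) (h : ℕ) :
    {B : P → V | ∑ p, dist (A p) (B p) = h}.ncard
      ≤ (Fintype.card P + h - 1).choose h * φ ^ h := by
  classical
  let distances (B : P → V) : P → ℕ := fun p => dist (A p) (B p)
  let configs : Finset (P → V) := univ.filter fun B => ∑ p, distances B p = h
  have hmaps : ∀ B ∈ configs, distances B ∈ piAntidiag univ h := by
    intro B hB
    simpa [configs] using hB
  have hfiber : ∀ δ ∈ piAntidiag univ h, #{B ∈ configs | distances B = δ} ≤ φ ^ h := by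
    intro δ hδ
    have hsub : {B ∈ configs | distances B = δ}
        ⊆ Fintype.piFinset fun p => univ.filter fun u => dist (A p) u = δ p := by
      intro B hB
      simp [← (mem_filter.mp hB).2, distances]
    have hsphere' : ∀ p, #(univ.filter fun u => dist (A p) u = δ p) ≤ φ ^ δ p := by
      intro p
      simpa [Set.ncard_eq_toFinset_card'] using hsphere (A p) (δ p)
    calc _ ≤ φ ^ ∑ p, δ p :=
          (card_le_card hsub).trans (Fintype.card_piFinset_le_pow_sum hsphere')
      _ = φ ^ h := by rw [(mem_piAntidiag.mp hδ).1]
  rw [Set.ncard_eq_toFinset_card', Set.toFinset_ofPred, ← card_piAntidiag_univ_nat, mul_comm]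
  exact card_le_mul_card_image_of_maps_to hmaps _ hfiber

theorem card_configs_at_distance_general {V P : Type*} [Fintype V] [Fintype P]
    (E : V → V → Prop) (φ k h : ℕ) (hk : 1 ≤ k)
    (hcard : Fintype.card P = k)
    (hball : ∀ (w : V) (m : ℕ), {u : V | gdist E w u = m}.ncard ≤ φ ^ m)
    (A : P → V) :
    (({B : P → V | Function.Injective B ∧ ∑ p, gdist E (A p) (B p) = h}.ncard : ℝ))
      ≤ ((Nat.factorial (h + k - 1) : ℝ) /
          ((Nat.factorial h : ℝ) * (Nat.factorial (k - 1) : ℝ))) * (φ : ℝ) ^ h := by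
  have hcount : {B : P → V | Function.Injective B ∧ ∑ p, gdist E (A p) (B p) = h}.ncard
      ≤ (h + k - 1).choose h * φ ^ h :=
    calc _ ≤ {B : P → V | ∑ p, gdist E (A p) (B p) = h}.ncard :=
          Set.ncard_le_ncard (fun _ => And.right) (Set.toFinite _)
      _ ≤ _ := by simpa only [hcard, add_comm k h] using ncard_sum_dist_eq_le (gdist E) hball A h
  calc _ ≤ (((h + k - 1).choose h * φ ^ h : ℕ) : ℝ) := by exact_mod_cast hcount
    _ = _ := by
      rw [Nat.cast_mul, Nat.cast_pow, Nat.cast_choose ℝ (by omega : h ≤ h + k - 1),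
        show h + k - 1 - h = k - 1 by omega]

/-- with `k` agents on a digraph of max out-degree `φ ≥ 1`, assuming the
single-vertex border bound (`# vertices at distance exactly m from w ≤ φ^m`), for any valid
(injective) configuration `A`, the number of valid configurations `B` with
`d(B,A) = Σ_p d(B p, A p) = h` is at most `((h+k-1)!/(h!·(k-1)!))·φ^h`.
Here `d(B p, A p)` is the shortest-path length from `A p` to `B p`. -/
theorem card_configs_at_distance {V P : Type*} [Fintype V] [Fintype P]
    (E : V → V → Prop) (φ k h : ℕ) (hφ : 1 ≤ φ) (hk : 1 ≤ k)
    (hcard : Fintype.card P = k)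
    (hball : ∀ (w : V) (m : ℕ), {u : V | gdist E w u = m}.ncard ≤ φ ^ m)
    (A : P → V) (hA : Function.Injective A) :
    (({B : P → V | Function.Injective B ∧ ∑ p, gdist E (A p) (B p) = h}.ncard : ℝ))
      ≤ ((Nat.factorial (h + k - 1) : ℝ) /
          ((Nat.factorial h : ℝ) * (Nat.factorial (k - 1) : ℝ))) * (φ : ℝ) ^ h :=
  card_configs_at_distance_general E φ k h hk hcard hball A
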